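/- Let n ≥ 2 and let D be any wire diagram on n wires (so D < 1̂ in P_n^*). Then any saturated chain from D to 1̂ in P_n^* whose label sequence is lexicographically smallest among all saturated chains from D to 1̂ has weakly ascending labels. -/

import Mathlib

open Equiv Finset

/-- A candidate wire diagram: a permutation of the `2 n` endpoint positions. -/
abbrev WDperm (n : ℕ) := Equiv.Perm (Fin (2 * n))

/-- `σ` is a wire diagram on `n` wires: a fixed-point-free involution of the `2 n` positions. -/
def IsWD {n : ℕ} (σ : WDperm n) : Prop := (∀ x, σ (σ x) = x) ∧ ∀ x, σ x ≠ x

instance IsWD.decPred {n : ℕ} : DecidablePred (@IsWD n) := fun σ => by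
  unfold IsWD; infer_instance

/-- Positions `a < c` are first endpoints of a pair of crossing wires `{a, σ a}`, `{c, σ c}`,
i.e. `a < c < σ a < σ c`. -/
def IsCrossing {n : ℕ} (σ : WDperm n) (a c : Fin (2 * n)) : Prop :=
  a < c ∧ c < σ a ∧ σ a < σ c

instance IsCrossing.dec {n : ℕ} (σ : WDperm n) (a c : Fin (2 * n)) :
    Decidable (IsCrossing σ a c) := by unfold IsCrossing; infer_instance

/-- The number `c(σ)` of crossings of `σ`. -/
def ncross {n : ℕ} (σ : WDperm n) : ℕ :=
  (Finset.univ.filter (fun p : Fin (2 * n) × Fin (2 * n) => IsCrossing σ p.1 p.2)).card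

/-- The nesting uncrossing of the crossing `{a, σ a}, {c, σ c}` (with `a < c < σ a < σ c`):
replace the pairs `{a,b},{c,d}` by `{a,d},{b,c}` where `b = σ a`, `d = σ c`. -/
def nestU {n : ℕ} (σ : WDperm n) (a c : Fin (2 * n)) : WDperm n :=
  Equiv.swap (σ a) (σ c) * σ * Equiv.swap (σ a) (σ c)

/-- The disjoint uncrossing: replace the pairs `{a,b},{c,d}` by `{a,c},{b,d}`. -/
def disjU {n : ℕ} (σ : WDperm n) (a c : Fin (2 * n)) : WDperm n :=
  Equiv.swap (σ a) c * σ * Equiv.swap (σ a) c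

/-- `τ` is obtained from `σ` by a nesting uncrossing of some crossing of `σ`. -/
def IsNestStep {n : ℕ} (σ τ : WDperm n) : Prop := ∃ a c, IsCrossing σ a c ∧ τ = nestU σ a c

/-- `τ` is obtained from `σ` by a disjoint uncrossing of some crossing of `σ`. -/
def IsDisjStep {n : ℕ} (σ τ : WDperm n) : Prop := ∃ a c, IsCrossing σ a c ∧ τ = disjU σ a c

/-- `τ` is obtained from `σ` by an uncrossing step that decreases the crossing number by one. -/
def UncCov {n : ℕ} (σ τ : WDperm n) : Prop :=
  (IsNestStep σ τ ∨ IsDisjStep σ τ) ∧ ncross τ + 1 = ncross σ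

/-- The dual uncrossing poset `P_n^*`: wire diagrams together with a top element `none = 1̂`
(the adjoined element `0̂` of `P_n`). -/
abbrev PStar (n : ℕ) := Option {σ : WDperm n // IsWD σ}

/-- The covering relation of `P_n^*`. -/
def Cov {n : ℕ} : PStar n → PStar n → Prop
  | some σ, some τ => UncCov σ.1 τ.1
  | some σ, none => ncross σ.1 = 0
  | none, _ => False

/-- The partial order of `P_n^*`: reflexive-transitive closure of the covering relation. -/
def ple {n : ℕ} : PStar n → PStar n → Prop := Relation.ReflTransGen Cov

/-- The (0-indexed) name `w(σ)(x)` of the wire through position `x`: the number of wires whose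
first endpoint is strictly smaller than the first endpoint of the wire through `x`. -/
def word {n : ℕ} (σ : WDperm n) (x : Fin (2 * n)) : ℕ :=
  (Finset.univ.filter (fun a : Fin (2 * n) => a < σ a ∧ a < min x (σ x))).card

/-- The start set `S(σ)`: the set of first endpoints of wires of `σ`. -/
def startSet {n : ℕ} (σ : WDperm n) : Finset (Fin (2 * n)) :=
  Finset.univ.filter (fun a => a < σ a)

/-- The noncrossing pair set `N(σ)` (on 0-indexed wire names): `(i, j)` with `i < j` for each
nested pair of wires `i < j`, and `(j, i)` for each disjoint pair of wires `i < j`. -/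
def NPairs {n : ℕ} (σ : WDperm n) : Set (ℕ × ℕ) :=
  {p | ∃ a c : Fin (2 * n), a < σ a ∧ c < σ c ∧ a < c ∧
        ((σ c < σ a ∧ p = (word σ a, word σ c)) ∨ (σ a < c ∧ p = (word σ c, word σ a)))}

/-- Lexicographic comparison of finsets via their increasing enumerations. -/
def finsetLexLE {m : ℕ} (A B : Finset (Fin m)) : Prop :=
  A = B ∨ List.Lex (· < ·) (A.sort (· ≤ ·)) (B.sort (· ≤ ·))

/-- Labels of the edge labeling: ordered pairs of (0-indexed) wire names, and a label `L`. -/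
inductive Lbl where
  | pair : ℕ → ℕ → Lbl
  | L : Lbl
deriving DecidableEq

/-- The total order `<λ` on labels. -/
def lblLT : Lbl → Lbl → Prop
  | .pair i j, .pair i' j' =>
      if i < j then (if i' < j' then i < i' ∨ (i = i' ∧ j < j') else True)
      else (if i' < j' then False else (j' < j ∨ (j = j' ∧ i' < i)))
  | .pair i j, .L => i < j
  | .L, .pair r s => s < r
  | .L, .L => False

/-- `≤λ` on labels. -/
def lblLE (p q : Lbl) : Prop := p = q ∨ lblLT p q

/-- The sorted list of positions where `σ` and `τ` differ. -/
def diffList {n : ℕ} (σ τ : WDperm n) : List (Fin (2 * n)) :=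
  (Finset.univ.filter (fun x => σ x ≠ τ x)).sort (· ≤ ·)

/-- The edge labeling `λ` of `P_n^*`: an uncrossing of the crossing formed by wires `k < m`
of the lower diagram gets label `(k, m)` if it is the nesting uncrossing and `(m, k)` if it is
the disjoint uncrossing; covers of the top element `1̂ = none` get the label `L`. -/
def lbl {n : ℕ} : PStar n → PStar n → Lbl
  | some σ, some τ =>
      match (diffList σ.1 τ.1)[0]?, (diffList σ.1 τ.1)[1]? with
      | some a, some c =>
          if τ.1 a = σ.1 c then Lbl.pair (word σ.1 a) (word σ.1 c)
          else Lbl.pair (word σ.1 c) (word σ.1 a)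
      | _, _ => Lbl.L
  | _, _ => Lbl.L

/-- `c` is a saturated chain from `u` to `v` in `P_n^*`. -/
def SatChain {n : ℕ} (c : List (PStar n)) (u v : PStar n) : Prop :=
  c.Chain' Cov ∧ c.head? = some u ∧ c.getLast? = some v

/-- The label sequence of a saturated chain. -/
def chainLabels {n : ℕ} (c : List (PStar n)) : List Lbl := c.zipWith lbl c.tail

/-- Lexicographic order on pairs of labels. -/
def pairLexLT (p q : Lbl × Lbl) : Prop := lblLT p.1 q.1 ∨ (p.1 = q.1 ∧ lblLT p.2 q.2)

/-- `x ⋖ y ⋖ z` is a topological ascent: its label pair is lexicographically strictly smaller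
than the label pair of every other saturated chain from `x` to `z`. -/
def TopAscent {n : ℕ} (x y z : PStar n) : Prop :=
  Cov x y ∧ Cov y z ∧ ∀ y' : PStar n, Cov x y' → Cov y' z → y' ≠ y →
    pairLexLT (lbl x y, lbl y z) (lbl x y', lbl y' z)

/-- `x ⋖ y ⋖ z` is a topological descent: a length-two chain that is not a topological ascent. -/
def TopDescent {n : ℕ} (x y z : PStar n) : Prop := Cov x y ∧ Cov y z ∧ ¬ TopAscent x y z

/-- Every length-two subchain of `c` is a topological ascent. -/
def AllTopAscents {n : ℕ} (c : List (PStar n)) : Prop :=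
  ∀ x y z : PStar n, [x, y, z] <:+: c → TopAscent x y z

/-- The number of inversions of a permutation. -/
def numInv {n : ℕ} (π : Equiv.Perm (Fin n)) : ℕ :=
  (Finset.univ.filter (fun p : Fin n × Fin n => p.1 < p.2 ∧ π p.2 < π p.1)).card

/-- One step of the Bruhat order: left multiplication by a transposition raising `inv` by one. -/
def BruhatStep {n : ℕ} (u v : Equiv.Perm (Fin n)) : Prop :=
  (∃ a b : Fin n, a ≠ b ∧ v = Equiv.swap a b * u) ∧ numInv v = numInv u + 1

/-- The Bruhat order on `S_n`. -/
def BruhatLE {n : ℕ} : Equiv.Perm (Fin n) → Equiv.Perm (Fin n) → Prop :=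
  Relation.ReflTransGen BruhatStep

/-- The set of second endpoints of wires of `σ`. -/
def secondEnds {n : ℕ} (σ : WDperm n) : Finset (Fin (2 * n)) :=
  Finset.univ.filter (fun b => σ b < b)

/-- The wire name at the `t`-th (0-indexed) second endpoint. -/
def piVal {n : ℕ} (σ : WDperm n) (t : ℕ) : ℕ :=
  (((secondEnds σ).sort (· ≤ ·))[t]?).elim 0 (word σ)

open Classical in
/-- The permutation `π(σ) ∈ S_n` reading the wire names at the second endpoints of `σ` in
increasing order of position. -/
noncomputable def piPerm {n : ℕ} (σ : WDperm n) : Equiv.Perm (Fin n) :=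
  if h : Function.Bijective (fun t : Fin n =>
      if ht : piVal σ (t : ℕ) < n then (⟨piVal σ (t : ℕ), ht⟩ : Fin n) else t)
  then Equiv.ofBijective _ h else 1

/-- Apply to the crossing at `(a, c)` the nesting (`nest = true`) or disjoint (`nest = false`)
uncrossing. -/
def uncrossAt {n : ℕ} (σ : WDperm n) (a c : Fin (2 * n)) (nest : Bool) : WDperm n :=
  if nest then nestU σ a c else disjU σ a c

/-! Always nesting the lexicographically first crossing `(a, c)` gives a greedy chain to `1̂`.
Its first label `(w a, w c)` is strictly below the label of every other cover: nesting labels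
grow with the crossing, while disjoint labels and `L` lie above every ascending pair. Nesting
the first crossing removes exactly one crossing, creates none lexicographically before
`(a, c)` and keeps all wire names, so the greedy labels weakly ascend. By induction the greedy
label sequence is lexicographically first, so every lexicographically first chain has it. -/

section Uncrossing

variable {n : ℕ} {σ : WDperm n} {a c s t x y : Fin (2 * n)}

theorem IsWD.conj_swap (hσ : IsWD σ) : IsWD (swap s t * σ * swap s t) :=
  ⟨fun x => by simp [hσ.1], fun x h => hσ.2 (swap s t x) (by simpa [swap_apply_eq_iff] using h)⟩

theorem IsWD.nestU (hσ : IsWD σ) : IsWD (nestU σ a c) := hσ.conj_swap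

theorem IsWD.filter_apply_ne_conj_swap (hσ : IsWD σ) (hst : s ≠ t) (hpair : σ s ≠ t) :
    univ.filter (fun x => σ x ≠ (swap s t * σ * swap s t) x) = {s, t, σ s, σ t} := by
  have hts : σ t ≠ s := fun h => hpair (by rw [← h, hσ.1])
  have hs := hσ.2 s
  have ht := hσ.2 t
  ext x
  rw [Finset.mem_filter]
  simp only [Finset.mem_univ, true_and, mem_insert, mem_singleton, Perm.mul_apply]
  constructor
  · intro h
    by_contra! hx
    have hxs : σ x ≠ s := fun h => hx.2.2.1 (by rw [← h, hσ.1])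
    have hxt : σ x ≠ t := fun h => hx.2.2.2 (by rw [← h, hσ.1])
    exact h (by rw [swap_apply_of_ne_of_ne hx.1 hx.2.1, swap_apply_of_ne_of_ne hxs hxt])
  · rintro (rfl | rfl | rfl | rfl) <;>
      simp [swap_apply_of_ne_of_ne, hσ.1 _, hs, ht, hts, hpair, hst, hst.symm]

theorem nestU_apply_of_ne (hxa : x ≠ a) (hxc : x ≠ c) (hxb : x ≠ σ a) (hxd : x ≠ σ c) :
    nestU σ a c x = σ x := by
  simp [nestU, swap_apply_of_ne_of_ne, hxb, hxd, hxa, hxc]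

theorem word_lt_word (hx : x < σ x) (hy : y < σ y) (hxy : x < y) : word σ x < word σ y := by
  unfold word
  rw [min_eq_left hx.le, min_eq_left hy.le]
  refine card_lt_card ⟨fun s hs => ?_, fun hsub => ?_⟩
  · simp only [mem_filter, mem_univ, true_and] at hs ⊢
    exact ⟨hs.1, hs.2.trans hxy⟩
  · simpa using hsub (by simpa using ⟨hx, hxy⟩ : x ∈ _)

namespace IsCrossing

theorem lt_apply_left (h : IsCrossing σ a c) : a < σ a := h.1.trans h.2.1

theorem lt_apply_right (h : IsCrossing σ a c) : c < σ c := h.2.1.trans h.2.2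

theorem sort_endpoints (h : IsCrossing σ a c) :
    ({a, c, σ a, σ c} : Finset (Fin (2 * n))).sort (· ≤ ·) = [a, c, σ a, σ c] := by
  obtain ⟨h1, h2, h3⟩ := h
  have hsorted : [a, c, σ a, σ c].Pairwise (· < ·) :=
    List.isChain_iff_pairwise.1 (by simp [h1, h2, h3])
  rw [← (List.toFinset_sort _ hsorted.nodup).2 (hsorted.imp le_of_lt)]
  simp

theorem diffList_nestU (hσ : IsWD σ) (h : IsCrossing σ a c) :
    diffList σ (nestU σ a c) = [a, c, σ a, σ c] := by
  obtain ⟨h1, h2, h3⟩ := id h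
  rw [diffList, nestU, hσ.filter_apply_ne_conj_swap h3.ne (by rw [hσ.1]; omega), hσ.1, hσ.1,
    ← h.sort_endpoints]
  congr 1
  ext; simp only [mem_insert, mem_singleton]; tauto

theorem diffList_disjU (hσ : IsWD σ) (h : IsCrossing σ a c) :
    diffList σ (disjU σ a c) = [a, c, σ a, σ c] := by
  obtain ⟨h1, h2, h3⟩ := id h
  rw [diffList, disjU, hσ.filter_apply_ne_conj_swap h2.ne' (by rw [hσ.1]; omega), hσ.1,
    ← h.sort_endpoints]
  congr 1
  ext; simp only [mem_insert, mem_singleton]; tauto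

theorem nestU_apply_left (h : IsCrossing σ a c) : nestU σ a c a = σ c := by
  obtain ⟨h1, h2, h3⟩ := h
  simp [nestU, swap_apply_of_ne_of_ne, (h1.trans h2).ne, ((h1.trans h2).trans h3).ne]

theorem nestU_apply_right (h : IsCrossing σ a c) : nestU σ a c c = σ a := by
  obtain ⟨h1, h2, h3⟩ := h
  simp [nestU, swap_apply_of_ne_of_ne, h2.ne, (h2.trans h3).ne]

theorem nestU_apply_apply_left (hσ : Function.Involutive σ) (h : IsCrossing σ a c) :
    nestU σ a c (σ a) = c := by
  obtain ⟨h1, h2, h3⟩ := h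
  simp [nestU, hσ _, swap_apply_of_ne_of_ne, h2.ne, (h2.trans h3).ne]

theorem nestU_apply_apply_right (hσ : Function.Involutive σ) (h : IsCrossing σ a c) :
    nestU σ a c (σ c) = a := by
  obtain ⟨h1, h2, h3⟩ := h
  simp [nestU, hσ _, swap_apply_of_ne_of_ne, (h1.trans h2).ne, ((h1.trans h2).trans h3).ne]

theorem disjU_apply_left (h : IsCrossing σ a c) : disjU σ a c a = c := by
  obtain ⟨h1, h2, h3⟩ := h
  simp [disjU, swap_apply_of_ne_of_ne, (h1.trans h2).ne, h1.ne]

theorem nestU_apply_of_lt (hσ : Function.Involutive σ) (h : IsCrossing σ a c) (hxa : x ≠ a)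
    (hxc : x ≠ c) (hx : x < σ x) : nestU σ a c x = σ x := by
  refine nestU_apply_of_ne hxa hxc ?_ ?_ <;> rintro rfl <;> rw [hσ] at hx
  · exact hx.not_gt h.lt_apply_left
  · exact hx.not_gt h.lt_apply_right

theorem lt_nestU_apply_iff (hσ : Function.Involutive σ) (h : IsCrossing σ a c) :
    x < nestU σ a c x ↔ x < σ x := by
  obtain ⟨h1, h2, h3⟩ := id h
  by_cases hxa : x = a
  · subst hxa; rw [h.nestU_apply_left]; omega
  by_cases hxc : x = c
  · subst hxc; rw [h.nestU_apply_right]; omega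
  by_cases hxb : x = σ a
  · subst hxb; rw [h.nestU_apply_apply_left hσ, hσ]; omega
  by_cases hxd : x = σ c
  · subst hxd; rw [h.nestU_apply_apply_right hσ, hσ]; omega
  rw [nestU_apply_of_ne hxa hxc hxb hxd]

theorem word_nestU (hσ : Function.Involutive σ) (h : IsCrossing σ a c) (hx : x < σ x) :
    word (nestU σ a c) x = word σ x := by
  have hx' := (h.lt_nestU_apply_iff hσ).2 hx
  unfold word
  rw [min_eq_left hx.le, min_eq_left hx'.le]
  simp only [h.lt_nestU_apply_iff hσ]

end IsCrossing

theorem lbl_some_of_eq_nestU {σ τ : {σ : WDperm n // IsWD σ}} (h : IsCrossing σ.1 a c)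
    (hτ : τ.1 = nestU σ.1 a c) : lbl (some σ) (some τ) = .pair (word σ.1 a) (word σ.1 c) := by
  simp [lbl, hτ, h.diffList_nestU σ.2, h.nestU_apply_left]

theorem lbl_some_of_eq_disjU {σ τ : {σ : WDperm n // IsWD σ}} (h : IsCrossing σ.1 a c)
    (hτ : τ.1 = disjU σ.1 a c) : lbl (some σ) (some τ) = .pair (word σ.1 c) (word σ.1 a) := by
  simp [lbl, hτ, h.diffList_disjU σ.2, h.disjU_apply_left, (h.2.1.trans h.2.2).ne]

end Uncrossing

theorem Finset.sum_sum_eq_pair_add_compl {α M : Type*} [Fintype α] [DecidableEq α]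
    [AddCommMonoid M] (f : α → α → M) {a c : α} (hac : a ≠ c) :
    ∑ x, ∑ y, f x y = f a a + f a c + f c a + f c c +
      ∑ e ∈ {a, c}ᶜ, (f a e + f c e + f e a + f e c) + ∑ x ∈ {a, c}ᶜ, ∑ y ∈ {a, c}ᶜ, f x y := by
  have split : ∀ g : α → M, ∑ x, g x = g a + g c + ∑ x ∈ {a, c}ᶜ, g x := fun g => by
    rw [← sum_add_sum_compl {a, c}, sum_pair hac]
  rw [split (fun x => ∑ y, f x y), split (f a), split (f c),
    sum_congr rfl fun x _ => split (f x)]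
  simp only [sum_add_distrib]
  abel

section Counting

variable {n : ℕ} {σ : WDperm n} {a c e x y : Fin (2 * n)}

-- `IsCrossing σ x y` spelled out, so that `split_ifs` and `omega` see through the condition.
def crossInd (σ : WDperm n) (x y : Fin (2 * n)) : ℕ :=
  if x < y ∧ y < σ x ∧ σ x < σ y then 1 else 0

theorem ncross_eq_sum_crossInd (σ : WDperm n) : ncross σ = ∑ x, ∑ y, crossInd σ x y := by
  rw [ncross, card_filter, ← Fintype.sum_prod_type']
  rfl

theorem IsCrossing.crossInd_nestU_of_ne (hσ : Function.Involutive σ) (h : IsCrossing σ a c)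
    (hxa : x ≠ a) (hxc : x ≠ c) (hya : y ≠ a) (hyc : y ≠ c) :
    crossInd (nestU σ a c) x y = crossInd σ x y := by
  by_cases hx : x < σ x
  · by_cases hy : y < σ y
    · simp only [crossInd, h.nestU_apply_of_lt hσ hxa hxc hx, h.nestU_apply_of_lt hσ hya hyc hy]
    · have := (h.lt_nestU_apply_iff hσ (x := y)).not.2 hy
      unfold crossInd
      split_ifs <;> omega
  · have := (h.lt_nestU_apply_iff hσ (x := x)).not.2 hx
    unfold crossInd
    split_ifs <;> omega

set_option maxHeartbeats 400000 in
theorem IsCrossing.crossInd_nestU_add (hσ : IsWD σ) (h : IsCrossing σ a c)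
    (hgap : ¬ (a < e ∧ e < c ∧ σ a < σ e ∧ σ e < σ c)) (hea : e ≠ a) (hec : e ≠ c) :
    crossInd (nestU σ a c) a e + crossInd (nestU σ a c) c e + crossInd (nestU σ a c) e a +
      crossInd (nestU σ a c) e c =
    crossInd σ a e + crossInd σ c e + crossInd σ e a + crossInd σ e c := by
  obtain ⟨h1, h2, h3⟩ := id h
  simp only [crossInd, h.nestU_apply_left, h.nestU_apply_right]
  by_cases heb : e = σ a
  · simp only [heb, h.nestU_apply_apply_left hσ.1, hσ.1 _]
    split_ifs <;> omega
  by_cases hed : e = σ c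
  · simp only [hed, h.nestU_apply_apply_right hσ.1, hσ.1 _]
    split_ifs <;> omega
  have hee := hσ.2 e
  have hσea : σ e ≠ σ a := fun h' => hea (σ.injective h')
  have hσec : σ e ≠ σ c := fun h' => hec (σ.injective h')
  have hσeb : σ e ≠ a := fun h' => heb (by rw [← h', hσ.1])
  have hσed : σ e ≠ c := fun h' => hed (by rw [← h', hσ.1])
  simp only [nestU_apply_of_ne hea hec heb hed]
  split_ifs <;> omega

/-- Only crossings with the two uncrossed wires change, and for each other wire their number is
preserved unless it runs from `(a, c)` to `(σ a, σ c)`, which `hgap` excludes. -/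
theorem IsCrossing.ncross_nestU (hσ : IsWD σ) (h : IsCrossing σ a c)
    (hgap : ∀ e, ¬ (a < e ∧ e < c ∧ σ a < σ e ∧ σ e < σ c)) :
    ncross (nestU σ a c) + 1 = ncross σ := by
  obtain ⟨h1, h2, h3⟩ := id h
  have hcorners : crossInd (nestU σ a c) a a + crossInd (nestU σ a c) a c +
      crossInd (nestU σ a c) c a + crossInd (nestU σ a c) c c + 1 =
      crossInd σ a a + crossInd σ a c + crossInd σ c a + crossInd σ c c := by
    simp only [crossInd, h.nestU_apply_left, h.nestU_apply_right]
    split_ifs <;> omega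
  have hmixed : ∑ e ∈ {a, c}ᶜ, (crossInd (nestU σ a c) a e + crossInd (nestU σ a c) c e +
      crossInd (nestU σ a c) e a + crossInd (nestU σ a c) e c) =
      ∑ e ∈ {a, c}ᶜ, (crossInd σ a e + crossInd σ c e + crossInd σ e a + crossInd σ e c) :=
    sum_congr rfl fun e he => by
      simp only [mem_compl, mem_insert, mem_singleton, not_or] at he
      exact h.crossInd_nestU_add hσ (hgap e) he.1 he.2
  have hrest : ∑ x ∈ {a, c}ᶜ, ∑ y ∈ {a, c}ᶜ, crossInd (nestU σ a c) x y =
      ∑ x ∈ {a, c}ᶜ, ∑ y ∈ {a, c}ᶜ, crossInd σ x y :=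
    sum_congr rfl fun x hx => sum_congr rfl fun y hy => by
      simp only [mem_compl, mem_insert, mem_singleton, not_or] at hx hy
      exact h.crossInd_nestU_of_ne hσ.1 hx.1 hx.2 hy.1 hy.2
  rw [ncross_eq_sum_crossInd, ncross_eq_sum_crossInd, sum_sum_eq_pair_add_compl _ h1.ne,
    sum_sum_eq_pair_add_compl _ h1.ne, hmixed, hrest, ← hcorners]
  ring

end Counting

section LexMin

variable {n : ℕ} {σ : WDperm n} {a c : Fin (2 * n)}

theorem exists_lexMin_crossing (h : ncross σ ≠ 0) :
    ∃ a c, IsCrossing σ a c ∧ ∀ x y, IsCrossing σ x y → toLex (a, c) ≤ toLex (x, y) := by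
  obtain ⟨⟨a, c⟩, hac, hmin⟩ := exists_min_image
    (univ.filter fun p : Fin (2 * n) × Fin (2 * n) => IsCrossing σ p.1 p.2) toLex
    (card_ne_zero.1 h)
  exact ⟨a, c, (mem_filter.1 hac).2, fun x y hxy => hmin (x, y) (by simpa using hxy)⟩

namespace IsCrossing

theorem gap_of_lexMin (h : IsCrossing σ a c)
    (hmin : ∀ x y, IsCrossing σ x y → toLex (a, c) ≤ toLex (x, y)) :
    ∀ e, ¬ (a < e ∧ e < c ∧ σ a < σ e ∧ σ e < σ c) := by
  rintro e ⟨hae, hec, hb, -⟩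
  have := Prod.Lex.toLex_le_toLex.1 (hmin a e ⟨hae, hec.trans h.2.1, hb⟩)
  simp only [lt_self_iff_false, true_and, false_or] at this
  exact this.not_gt hec

theorem lexMin_nestU (hσ : Function.Involutive σ) (h : IsCrossing σ a c)
    (hmin : ∀ x y, IsCrossing σ x y → toLex (a, c) ≤ toLex (x, y)) :
    ∀ x y, IsCrossing (nestU σ a c) x y → toLex (a, c) ≤ toLex (x, y) := by
  obtain ⟨h1, h2, h3⟩ := id h
  intro x y hxy
  have hy := (h.lt_nestU_apply_iff hσ).1 hxy.lt_apply_right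
  rw [Prod.Lex.toLex_le_toLex]
  by_contra! hlt
  rcases hlt.1.lt_or_eq with hxa | rfl
  · have hx := (h.lt_nestU_apply_iff hσ).1 hxy.lt_apply_left
    have hnot : ∀ y', ¬ IsCrossing σ x y' := fun y' hxy' =>
      (Prod.Lex.toLex_le_toLex.1 (hmin x y' hxy')).elim hxa.not_gt fun h' => hxa.ne' h'.1
    obtain ⟨q1, q2, q3⟩ := hxy
    rw [h.nestU_apply_of_lt hσ hxa.ne (hxa.trans h1).ne hx] at q2 q3
    by_cases hya : y = a
    · subst hya
      rw [h.nestU_apply_left] at q3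
      rcases lt_or_gt_of_ne (σ.injective.ne hxa.ne) with hb | hb
      · exact hnot y ⟨q1, q2, hb⟩
      · exact hnot c ⟨q1.trans h1, h2.trans hb, q3⟩
    by_cases hyc : y = c
    · subst hyc
      rw [h.nestU_apply_right] at q3
      exact hnot a ⟨hxa, h1.trans q2, q3⟩
    rw [h.nestU_apply_of_lt hσ hya hyc hy] at q3
    exact hnot y ⟨q1, q2, q3⟩
  · have hyc := hlt.2 rfl
    obtain ⟨q1, q2, q3⟩ := hxy
    rw [h.nestU_apply_left, h.nestU_apply_of_lt hσ q1.ne' hyc.ne hy] at q3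
    have := Prod.Lex.toLex_le_toLex.1 (hmin x y ⟨q1, hyc.trans h2, h3.trans q3⟩)
    simp only [lt_self_iff_false, true_and, false_or] at this
    exact this.not_gt hyc

end IsCrossing

end LexMin

section Labels

variable {n : ℕ} {i j i' j' : ℕ}

theorem lblLT_pair_pair_of_lt (hij : i < j) (hij' : i' < j')
    (h : toLex (i, j) < toLex (i', j')) : lblLT (.pair i j) (.pair i' j') := by
  simpa only [lblLT, if_pos hij, if_pos hij', Prod.Lex.toLex_lt_toLex] using h

theorem lblLT_pair_pair_swap (hij : i < j) (hij' : i' < j') :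
    lblLT (.pair i j) (.pair j' i') := by
  simp only [lblLT, if_pos hij, if_neg hij'.not_gt]

theorem chainLabels_cons_cons {x y : PStar n} {t : List (PStar n)} :
    chainLabels (x :: y :: t) = lbl x y :: chainLabels (y :: t) := rfl

variable {ρ : {σ : WDperm n // IsWD σ}} {y : PStar n} {a c : Fin (2 * n)}

theorem lblLT_lbl_or_eq_nestU (ha : a < ρ.1 a) (hc : c < ρ.1 c) (hac : a < c)
    (hmin : ∀ x y, IsCrossing ρ.1 x y → toLex (a, c) ≤ toLex (x, y)) (hcov : Cov (some ρ) y) :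
    lblLT (.pair (word ρ.1 a) (word ρ.1 c)) (lbl (some ρ) y) ∨
      ∃ τ, y = some τ ∧ τ.1 = nestU ρ.1 a c ∧
        lbl (some ρ) y = .pair (word ρ.1 a) (word ρ.1 c) := by
  have hw := word_lt_word ha hc hac
  match y, hcov with
  | none, _ => exact Or.inl hw
  | some τ, ⟨hstep, _⟩ =>
    rcases hstep with ⟨x, x', hxx, hτ⟩ | ⟨x, x', hxx, hτ⟩ <;>
      have hw' := word_lt_word hxx.lt_apply_left hxx.lt_apply_right hxx.1
    · rw [lbl_some_of_eq_nestU hxx hτ]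
      rcases (hmin x x' hxx).lt_or_eq with hlt | heq
      · refine Or.inl (lblLT_pair_pair_of_lt hw hw' (Prod.Lex.toLex_lt_toLex.2 ?_))
        rcases Prod.Lex.toLex_lt_toLex.1 hlt with hx | ⟨hx, hx'⟩
        · exact Or.inl (word_lt_word ha hxx.lt_apply_left hx)
        · exact Or.inr ⟨congrArg (word ρ.1) hx, word_lt_word hc hxx.lt_apply_right hx'⟩
      · obtain ⟨rfl, rfl⟩ := Prod.ext_iff.1 (toLex.injective heq)
        exact Or.inr ⟨τ, rfl, hτ, rfl⟩
    · rw [lbl_some_of_eq_disjU hxx hτ]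
      exact Or.inl (lblLT_pair_pair_swap hw hw')

end Labels

namespace SatChain

variable {n : ℕ} {l : List (PStar n)} {u v y : PStar n}

theorem cons (hcov : Cov u y) (hl : SatChain l y v) : SatChain (u :: l) u v := by
  obtain ⟨hchain, hhead, hlast⟩ := hl
  obtain ⟨t, rfl⟩ : ∃ t, l = y :: t := by
    cases l with
    | nil => simp at hhead
    | cons z t => exact ⟨t, by simpa using hhead⟩
  exact ⟨List.isChain_cons_cons.2 ⟨hcov, hchain⟩, rfl, by rwa [List.getLast?_cons_cons]⟩

theorem exists_cons (hl : SatChain l u v) (huv : u ≠ v) :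
    ∃ y t, l = u :: y :: t ∧ Cov u y ∧ SatChain (y :: t) y v := by
  obtain ⟨hchain, hhead, hlast⟩ := hl
  match l, hhead with
  | [_], rfl => simp_all
  | _ :: y :: t, rfl =>
    exact ⟨y, t, rfl, (List.isChain_cons_cons.1 hchain).1,
      (List.isChain_cons_cons.1 hchain).2, rfl, by rwa [List.getLast?_cons_cons] at hlast⟩

theorem eq_singleton_of_top (hl : SatChain l none v) : l = [none] := by
  obtain ⟨hchain, hhead, -⟩ := hl
  match l, hhead with
  | [_], rfl => rfl
  | _ :: y :: t, rfl => exact ((List.isChain_cons_cons.1 hchain).1 : Cov none y).elim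

end SatChain

section GreedyChain

variable {n : ℕ}

theorem chainLabels_eq_of_ncross_eq_zero {σ : {σ : WDperm n // IsWD σ}} {c : List (PStar n)}
    (h0 : ncross σ.1 = 0) (hc : SatChain c (some σ) none) : chainLabels c = [.L] := by
  obtain ⟨y, t, rfl, hcov, ht⟩ := hc.exists_cons (by simp)
  match y, hcov with
  | some _, hcov => exact absurd (h0 ▸ hcov.2) (Nat.succ_ne_zero _)
  | none, _ => rw [ht.eq_singleton_of_top]; rfl

theorem IsCrossing.lblLE_lbl_nestU {σ τ : {σ : WDperm n // IsWD σ}} {y : PStar n}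
    {a c : Fin (2 * n)} (h : IsCrossing σ.1 a c)
    (hmin : ∀ x y, IsCrossing σ.1 x y → toLex (a, c) ≤ toLex (x, y))
    (hτ : τ.1 = nestU σ.1 a c) (hcov : Cov (some τ) y) :
    lblLE (lbl (some σ) (some τ)) (lbl (some τ) y) := by
  have hσ := σ.2.1
  have hnext := lblLT_lbl_or_eq_nestU (hτ ▸ (h.lt_nestU_apply_iff hσ).2 h.lt_apply_left)
    (hτ ▸ (h.lt_nestU_apply_iff hσ).2 h.lt_apply_right) h.1 (hτ ▸ h.lexMin_nestU hσ hmin) hcov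
  rw [hτ, h.word_nestU hσ h.lt_apply_left, h.word_nestU hσ h.lt_apply_right] at hnext
  rw [lbl_some_of_eq_nestU h hτ]
  rcases hnext with hlt | ⟨-, -, -, heq⟩
  · exact Or.inr hlt
  · exact Or.inl heq.symm

theorem exists_lexMin_satChain_ascending (σ : {σ : WDperm n // IsWD σ}) :
    ∃ g, SatChain g (some σ) none ∧ (chainLabels g).IsChain lblLE ∧
      ∀ c, SatChain c (some σ) none →
        chainLabels g = chainLabels c ∨ List.Lex lblLT (chainLabels g) (chainLabels c) := by
  induction hN : ncross σ.1 using Nat.strong_induction_on generalizing σ with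
  | _ N ih =>
  by_cases h0 : N = 0
  · subst h0
    refine ⟨[some σ, none], ⟨List.isChain_pair.2 hN, rfl, rfl⟩, List.isChain_singleton _,
      fun c hc => Or.inl (chainLabels_eq_of_ncross_eq_zero hN hc).symm⟩
  obtain ⟨a, c, h, hmin⟩ := exists_lexMin_crossing (hN ▸ h0)
  set τ : {σ : WDperm n // IsWD σ} := ⟨nestU σ.1 a c, σ.2.nestU⟩
  have hcov : Cov (some σ) (some τ) :=
    ⟨Or.inl ⟨a, c, h, rfl⟩, h.ncross_nestU σ.2 (h.gap_of_lexMin hmin)⟩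
  obtain ⟨g, hg, hasc, hlex⟩ := ih (ncross τ.1) (hN ▸ hcov.2 ▸ Nat.lt_succ_self _) τ rfl
  obtain ⟨y, t, rfl, hτy, -⟩ := hg.exists_cons (by simp)
  refine ⟨some σ :: some τ :: y :: t, hg.cons hcov,
    List.isChain_cons_cons.2 ⟨h.lblLE_lbl_nestU hmin rfl hτy, hasc⟩, fun c hc => ?_⟩
  obtain ⟨y', t', rfl, hcov', ht'⟩ := hc.exists_cons (by simp)
  simp only [chainLabels_cons_cons (x := some σ)]
  rcases lblLT_lbl_or_eq_nestU h.lt_apply_left h.lt_apply_right h.1 hmin hcov' with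
    hlt | ⟨τ', rfl, hτ', -⟩
  · exact Or.inr (List.Lex.rel (lbl_some_of_eq_nestU (τ := τ) h rfl ▸ hlt))
  · obtain rfl : τ' = τ := Subtype.ext hτ'
    rcases hlex _ ht' with heq | hlt
    · exact Or.inl (by rw [heq])
    · exact Or.inr (List.Lex.cons hlt)

end GreedyChain

theorem lex_first_chain_to_top_ascending_general (n : ℕ)
    (D : {σ : WDperm n // IsWD σ}) (c : List (PStar n))
    (hc : SatChain c (some D) none)
    (hmin : ∀ c' : List (PStar n), SatChain c' (some D) none →
      ¬ List.Lex lblLT (chainLabels c') (chainLabels c)) :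
    List.Chain' lblLE (chainLabels c) := by
  obtain ⟨g, hg, hasc, hlex⟩ := exists_lexMin_satChain_ascending D
  rcases hlex c hc with heq | hlt
  · exact heq ▸ hasc
  · exact absurd hlt (hmin g hg)

/-- Any lexicographically smallest saturated chain from a wire diagram `D` to `1̂` in `P_n^*`
has weakly ascending labels. -/
theorem lex_first_chain_to_top_ascending (n : ℕ) (hn : 2 ≤ n)
    (D : {σ : WDperm n // IsWD σ}) (c : List (PStar n))
    (hc : SatChain c (some D) none)
    (hmin : ∀ c' : List (PStar n), SatChain c' (some D) none →
      ¬ List.Lex lblLT (chainLabels c') (chainLabels c)) :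
    List.Chain' lblLE (chainLabels c) :=
  lex_first_chain_to_top_ascending_general n D c hc hmin
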